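/- Let α > 0 and define φ_n(x) = √(n!/Γ(n+1+α)) · x^{α/2} e^{−x/2} L_n^{(α)}(x) for x > 0, and ℰ_{m,n} = ∫_0^∞ φ_m′(x) φ_n(x) dx (where φ_m′ denotes the derivative of φ_m). Then ℰ_{m,m} = 0 for all m ∈ ℕ, and for all integers m ≥ n + 1: ℰ_{m,n} = −(1/2) √( m! Γ(n+1+α) / (Γ(m+1+α) n!) ). -/

import Mathlib

open MeasureTheory

/-- The generalized Laguerre polynomial
`L_n^{(α)}(x) = ∑_{k=0}^{n} (−1)^k (Γ(n+α+1)/(Γ(k+α+1)(n−k)! k!)) x^k`. -/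
noncomputable def laguerreL (α : ℝ) (n : ℕ) (x : ℝ) : ℝ :=
  ∑ k ∈ Finset.range (n + 1),
    (-1 : ℝ) ^ k * (Real.Gamma ((n : ℝ) + α + 1) /
      (Real.Gamma ((k : ℝ) + α + 1) * (Nat.factorial (n - k)) * (Nat.factorial k))) * x ^ k

/-- The orthonormal Laguerre functions
`φ_n(x) = √(n!/Γ(n+1+α)) x^{α/2} e^{−x/2} L_n^{(α)}(x)`. -/
noncomputable def laguerreFun (α : ℝ) (n : ℕ) (x : ℝ) : ℝ :=
  Real.sqrt ((Nat.factorial n : ℝ) / Real.Gamma ((n : ℝ) + 1 + α)) *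
    x ^ (α / 2) * Real.exp (-x / 2) * laguerreL α n x

/-- The differentiation matrix `ℰ_{m,n} = ∫_0^∞ φ_m′(x) φ_n(x) dx`. -/
noncomputable def Emat (α : ℝ) (m n : ℕ) : ℝ :=
  ∫ x in Set.Ioi (0 : ℝ), deriv (laguerreFun α m) x * laguerreFun α n x

/-!
On `(0, ∞)` the function `φ_n` is a combination `c_n ∑_k a_{nk} g_{α/2+k}` of the functions
`g_s x = x ^ s * exp (-x / 2)`, where `c_n = √(n! / Γ (n + 1 + α))` and `a_{nk}` are the
coefficients of `L_n^{(α)}`, and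
`∫₀^∞ g_s' g_t = (s - t) / 2 * Γ (s + t)`. Hence
`ℰ_{m,n} = c_m c_n / 2 * ∑_{k,l} a_{mk} a_{nl} (k - l) Γ (α + k + l)`,
which vanishes for `m = n` by antisymmetry in `(k, l)`.

For `m > n`, Chu–Vandermonde gives the Gamma moments
`∑_k a_{mk} Γ (s + k) = Γ s * (α + 1 - s)_m / m!`, which vanish at `s = α + 1, …, α + m`
and equal `Γ α` at `s = α`. Writing
`(k - l) Γ (α + k + l) = Γ (α + l + 1 + k) - (α + 2l) Γ (α + l + k)`,
only the term `l = 0` survives, and it equals `-a_{n0} Γ (α + 1) = -Γ (n + α + 1) / n!`.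
-/

open Finset Polynomial

theorem descPochhammer_eval_add_eq_sum {R : Type*} [CommRing R] (x y : R) (n : ℕ) :
    (descPochhammer R n).eval (x + y) = ∑ k ∈ range (n + 1),
      (n.choose k : R) * ((descPochhammer R k).eval x * (descPochhammer R (n - k)).eval y) := by
  have smeval_eq (j : ℕ) (z : R) :
      (descPochhammer ℤ j).smeval z = (descPochhammer R j).eval z := by
    rw [← aeval_eq_smeval, aeval_def, ← eval_map, algebraMap_int_eq, descPochhammer_map]
  simpa only [smeval_eq, Nat.sum_antidiagonal_eq_sum_range_succ
    (fun i j => (n.choose i : R) * ((descPochhammer R i).eval x * (descPochhammer R j).eval y))]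
    using Ring.descPochhammer_smeval_add (r := x) (s := y) n (Commute.all x y)

theorem Real.Gamma_add_nat_eq_mul_ascPochhammer {s : ℝ} (hs : 0 < s) (n : ℕ) :
    Real.Gamma (s + n) = Real.Gamma s * (ascPochhammer ℝ n).eval s := by
  induction n with
  | zero => simp
  | succ n ih =>
    rw [Nat.cast_succ, ← add_assoc, Real.Gamma_add_one (by positivity), ih,
      ascPochhammer_succ_eval]
    ring

noncomputable def rpowExpHalf (s x : ℝ) : ℝ := x ^ s * Real.exp (-x / 2)

theorem hasDerivAt_rpowExpHalf (s : ℝ) {x : ℝ} (hx : 0 < x) :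
    HasDerivAt (rpowExpHalf s) ((s * x ^ (s - 1) - x ^ s / 2) * Real.exp (-x / 2)) x :=
  ((Real.hasDerivAt_rpow_const (Or.inl hx.ne')).fun_mul
    ((hasDerivAt_neg x).div_const 2).exp).congr_deriv (by ring)

theorem deriv_rpowExpHalf_mul (s t : ℝ) {x : ℝ} (hx : 0 < x) :
    deriv (rpowExpHalf s) x * rpowExpHalf t x =
      s * (Real.exp (-x) * x ^ (s + t - 1)) - 1 / 2 * (Real.exp (-x) * x ^ (s + t + 1 - 1)) := by
  have hexp : Real.exp (-x / 2) * Real.exp (-x / 2) = Real.exp (-x) := by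
    rw [← Real.exp_add]; ring_nf
  rw [(hasDerivAt_rpowExpHalf s hx).deriv, rpowExpHalf, add_sub_cancel_right,
    Real.rpow_add hx, Real.rpow_sub_one hx.ne', Real.rpow_sub_one hx.ne', Real.rpow_add hx,
    ← hexp]
  field_simp

theorem integrableOn_deriv_rpowExpHalf_mul {s t : ℝ} (h : 0 < s + t) :
    IntegrableOn (fun x => deriv (rpowExpHalf s) x * rpowExpHalf t x) (Set.Ioi 0) :=
  IntegrableOn.congr_fun (((Real.GammaIntegral_convergent h).const_mul s).sub
    ((Real.GammaIntegral_convergent (s := s + t + 1) (by linarith)).const_mul (1 / 2)))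
    (fun _ hx => (deriv_rpowExpHalf_mul s t hx).symm) measurableSet_Ioi

theorem integral_deriv_rpowExpHalf_mul {s t : ℝ} (h : 0 < s + t) :
    ∫ x in Set.Ioi 0, deriv (rpowExpHalf s) x * rpowExpHalf t x =
      (s - t) / 2 * Real.Gamma (s + t) := by
  rw [setIntegral_congr_fun measurableSet_Ioi fun _ hx => deriv_rpowExpHalf_mul s t hx,
    integral_sub ((Real.GammaIntegral_convergent h).const_mul s)
      ((Real.GammaIntegral_convergent (s := s + t + 1) (by linarith)).const_mul (1 / 2)),
    integral_const_mul, integral_const_mul, ← Real.Gamma_eq_integral h,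
    ← Real.Gamma_eq_integral (by linarith), Real.Gamma_add_one h.ne']
  ring

noncomputable def laguerreCoeff (α : ℝ) (n k : ℕ) : ℝ :=
  (-1 : ℝ) ^ k * (Real.Gamma ((n : ℝ) + α + 1) /
    (Real.Gamma ((k : ℝ) + α + 1) * (Nat.factorial (n - k)) * (Nat.factorial k)))

theorem laguerreL_eq_sum (α : ℝ) (n : ℕ) (x : ℝ) :
    laguerreL α n x = ∑ k ∈ range (n + 1), laguerreCoeff α n k * x ^ k := rfl

theorem laguerreCoeff_mul_Gamma {α s : ℝ} (hα : -1 < α) (hs : 0 < s) {n k : ℕ}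
    (hk : k ≤ n) :
    laguerreCoeff α n k * Real.Gamma (s + k) = Real.Gamma s / n.factorial *
      ((n.choose k : ℝ) * ((descPochhammer ℝ k).eval (-s) *
        (descPochhammer ℝ (n - k)).eval (α + n))) := by
  have hk₀ : 0 < (k : ℝ) + α + 1 := by have := k.cast_nonneg (α := ℝ); linarith
  have hΓn : Real.Gamma (n + α + 1) = Real.Gamma (k + α + 1) *
      (descPochhammer ℝ (n - k)).eval (α + n) := by
    rw [descPochhammer_eval_eq_ascPochhammer, Nat.cast_sub hk,
      show α + n - (n - k) + 1 = (k : ℝ) + α + 1 by ring,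
      ← Real.Gamma_add_nat_eq_mul_ascPochhammer hk₀, Nat.cast_sub hk]
    ring_nf
  have hΓk : Real.Gamma (k + α + 1) ≠ 0 := (Real.Gamma_pos_of_pos hk₀).ne'
  rw [laguerreCoeff, Real.Gamma_add_nat_eq_mul_ascPochhammer hs, ← neg_neg s,
    ascPochhammer_eval_neg_eq_descPochhammer, neg_neg, hΓn, Nat.cast_choose ℝ hk]
  field_simp
  simp [← pow_mul]

theorem sum_laguerreCoeff_mul_Gamma {α s : ℝ} (hα : -1 < α) (hs : 0 < s) (n : ℕ) :
    ∑ k ∈ range (n + 1), laguerreCoeff α n k * Real.Gamma (s + k) =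
      Real.Gamma s / n.factorial * (descPochhammer ℝ n).eval (α + n - s) := by
  rw [sub_eq_neg_add, descPochhammer_eval_add_eq_sum, mul_sum]
  exact sum_congr rfl fun k hk =>
    laguerreCoeff_mul_Gamma hα hs (Nat.lt_succ_iff.mp (mem_range.mp hk))

theorem sum_laguerreCoeff_mul_Gamma_eq_zero {α : ℝ} (hα : -1 < α) {n t : ℕ} (ht : 0 < t)
    (htn : t ≤ n) :
    ∑ k ∈ range (n + 1), laguerreCoeff α n k * Real.Gamma (α + t + k) = 0 := by
  have hαt : 0 < α + t := by
    have : (1 : ℝ) ≤ t := Nat.one_le_cast.mpr ht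
    linarith
  rw [sum_laguerreCoeff_mul_Gamma hα hαt, show α + n - (α + t) = ((n - t : ℕ) : ℝ) by
    push_cast [Nat.cast_sub htn]; ring, descPochhammer_eval_eq_descFactorial,
    Nat.descFactorial_eq_zero_iff_lt.mpr (by omega), Nat.cast_zero, mul_zero]

theorem sum_laguerreCoeff_mul_Gamma_self {α : ℝ} (hα : 0 < α) (n : ℕ) :
    ∑ k ∈ range (n + 1), laguerreCoeff α n k * Real.Gamma (α + k) = Real.Gamma α := by
  rw [sum_laguerreCoeff_mul_Gamma (by linarith) hα, add_sub_cancel_left,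
    descPochhammer_eval_eq_descFactorial, Nat.descFactorial_self]
  field_simp

theorem sum_laguerreCoeff_mul_sub_mul_Gamma {α : ℝ} (hα : 0 < α) (m l : ℕ) :
    ∑ k ∈ range (m + 1), laguerreCoeff α m k * (((k : ℝ) - l) * Real.Gamma (α + k + l)) =
      ∑ k ∈ range (m + 1), laguerreCoeff α m k * Real.Gamma (α + ↑(l + 1) + k) -
        (α + 2 * l) * ∑ k ∈ range (m + 1), laguerreCoeff α m k * Real.Gamma (α + l + k) := by
  rw [mul_sum, ← sum_sub_distrib]
  refine sum_congr rfl fun k _ => ?_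
  rw [Nat.cast_succ, add_right_comm α, ← add_assoc, add_right_comm _ 1,
    Real.Gamma_add_one (by positivity), add_right_comm α]
  ring

theorem sum_sum_laguerreCoeff_self (α : ℝ) (m : ℕ) :
    ∑ k ∈ range (m + 1), ∑ l ∈ range (m + 1), laguerreCoeff α m k * laguerreCoeff α m l *
      (((k : ℝ) - l) * Real.Gamma (α + k + l)) = 0 := by
  refine CharZero.eq_neg_self_iff.mp ?_
  conv_lhs => rw [sum_comm]
  simp only [← sum_neg_distrib]
  refine sum_congr rfl fun k _ => sum_congr rfl fun l _ => ?_
  rw [add_right_comm α]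
  ring

theorem sum_sum_laguerreCoeff_of_lt {α : ℝ} (hα : 0 < α) {m n : ℕ} (hnm : n < m) :
    ∑ k ∈ range (m + 1), ∑ l ∈ range (n + 1), laguerreCoeff α m k * laguerreCoeff α n l *
      (((k : ℝ) - l) * Real.Gamma (α + k + l)) = -(Real.Gamma (n + α + 1) / n.factorial) := by
  rw [sum_comm]
  simp only [mul_comm (laguerreCoeff α m _) (laguerreCoeff α n _), mul_assoc, ← mul_sum]
  rw [sum_eq_single_of_mem 0 (by simp)]
  · rw [sum_laguerreCoeff_mul_sub_mul_Gamma hα, sum_laguerreCoeff_mul_Gamma_eq_zero (by linarith)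
      (by omega) (by omega)]
    have hcoeff :
        laguerreCoeff α n 0 = Real.Gamma (n + α + 1) / (α * Real.Gamma α * n.factorial) := by
      simp [laguerreCoeff, Real.Gamma_add_one hα.ne']
    simp only [Nat.cast_zero, add_zero, sum_laguerreCoeff_mul_Gamma_self hα, hcoeff]
    have := (Real.Gamma_pos_of_pos hα).ne'
    field_simp
    ring
  · intro l hl hl0
    have hln := mem_range.mp hl
    rw [sum_laguerreCoeff_mul_sub_mul_Gamma hα, sum_laguerreCoeff_mul_Gamma_eq_zero (by linarith)
      (by omega) (by omega),
      sum_laguerreCoeff_mul_Gamma_eq_zero (by linarith) (by omega) (by omega)]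
    simp

theorem laguerreFun_eq_sum (α : ℝ) (n : ℕ) {x : ℝ} (hx : 0 < x) :
    laguerreFun α n x = Real.sqrt (n.factorial / Real.Gamma (n + 1 + α)) *
      ∑ k ∈ range (n + 1), laguerreCoeff α n k * rpowExpHalf (α / 2 + k) x := by
  simp only [laguerreFun, laguerreL_eq_sum, rpowExpHalf, Real.rpow_add_natCast hx.ne', mul_sum]
  exact sum_congr rfl fun k _ => by ring

theorem deriv_laguerreFun (α : ℝ) (n : ℕ) {x : ℝ} (hx : 0 < x) :
    deriv (laguerreFun α n) x = Real.sqrt (n.factorial / Real.Gamma (n + 1 + α)) *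
      ∑ k ∈ range (n + 1), laguerreCoeff α n k * deriv (rpowExpHalf (α / 2 + k)) x := by
  have hloc : laguerreFun α n =ᶠ[nhds x] fun y =>
      Real.sqrt (n.factorial / Real.Gamma (n + 1 + α)) *
        ∑ k ∈ range (n + 1), laguerreCoeff α n k * rpowExpHalf (α / 2 + k) y :=
    Filter.eventually_of_mem (Ioi_mem_nhds hx) fun y hy => laguerreFun_eq_sum α n hy
  rw [hloc.deriv_eq, ((HasDerivAt.fun_sum fun (k : ℕ) _ =>
    (hasDerivAt_rpowExpHalf (α / 2 + k) hx).const_mul (laguerreCoeff α n k)).const_mul _).deriv]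
  simp only [(hasDerivAt_rpowExpHalf _ hx).deriv]

theorem Emat_eq_sum {α : ℝ} (hα : 0 < α) (m n : ℕ) :
    Emat α m n = Real.sqrt (m.factorial / Real.Gamma (m + 1 + α)) *
      Real.sqrt (n.factorial / Real.Gamma (n + 1 + α)) / 2 *
      ∑ k ∈ range (m + 1), ∑ l ∈ range (n + 1), laguerreCoeff α m k * laguerreCoeff α n l *
        (((k : ℝ) - l) * Real.Gamma (α + k + l)) := by
  set cm := Real.sqrt (m.factorial / Real.Gamma (m + 1 + α))
  set cn := Real.sqrt (n.factorial / Real.Gamma (n + 1 + α))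
  have hpos (k l : ℕ) : 0 < α / 2 + k + (α / 2 + l) := by positivity
  calc Emat α m n
      = ∫ x in Set.Ioi 0, ∑ k ∈ range (m + 1), ∑ l ∈ range (n + 1),
          cm * cn * laguerreCoeff α m k * laguerreCoeff α n l *
            (deriv (rpowExpHalf (α / 2 + k)) x * rpowExpHalf (α / 2 + l) x) := by
        refine setIntegral_congr_fun measurableSet_Ioi fun x hx => ?_
        rw [deriv_laguerreFun α m hx, laguerreFun_eq_sum α n hx, mul_mul_mul_comm, sum_mul_sum]
        simp only [mul_sum]
        exact sum_congr rfl fun k _ => sum_congr rfl fun l _ => by ring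
    _ = ∑ k ∈ range (m + 1), ∑ l ∈ range (n + 1), cm * cn * laguerreCoeff α m k *
          laguerreCoeff α n l * ((α / 2 + k - (α / 2 + l)) / 2 *
            Real.Gamma (α / 2 + k + (α / 2 + l))) := by
        rw [integral_finsetSum _ fun k _ => integrable_finsetSum _ fun l _ =>
          (integrableOn_deriv_rpowExpHalf_mul (hpos k l)).const_mul _]
        refine sum_congr rfl fun k _ => ?_
        rw [integral_finsetSum _ fun l _ =>
          (integrableOn_deriv_rpowExpHalf_mul (hpos k l)).const_mul _]
        refine sum_congr rfl fun l _ => ?_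
        rw [integral_const_mul, integral_deriv_rpowExpHalf_mul (hpos k l)]
    _ = _ := by
        simp only [mul_sum]
        refine sum_congr rfl fun k _ => sum_congr rfl fun l _ => ?_
        rw [show α / 2 + k + (α / 2 + l) = α + k + l by ring]
        ring

/-- For `α > 0`: `ℰ_{m,m} = 0` for all `m`, and for `m ≥ n + 1`:
`ℰ_{m,n} = −(1/2)√(m! Γ(n+1+α)/(Γ(m+1+α) n!))`. -/
theorem Emat_entries (α : ℝ) (hα : 0 < α) :
    (∀ m : ℕ, Emat α m m = 0) ∧
    (∀ m n : ℕ, n + 1 ≤ m →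
      Emat α m n = -(1 / 2) * Real.sqrt ((Nat.factorial m : ℝ) *
        Real.Gamma ((n : ℝ) + 1 + α) /
          (Real.Gamma ((m : ℝ) + 1 + α) * (Nat.factorial n : ℝ)))) := by
  refine ⟨fun m => by rw [Emat_eq_sum hα, sum_sum_laguerreCoeff_self, mul_zero],
    fun m n hnm => ?_⟩
  rw [Emat_eq_sum hα, sum_sum_laguerreCoeff_of_lt hα hnm, add_right_comm (n : ℝ) α]
  set Γn := Real.Gamma (n + 1 + α)
  have hsqrt : √(n.factorial / Γn) * (Γn / n.factorial) = √(Γn / n.factorial) := by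
    rw [show Γn / n.factorial = (n.factorial / Γn)⁻¹ from (inv_div _ _).symm,
      ← div_eq_mul_inv, Real.sqrt_div_self', Real.sqrt_inv, one_div]
  rw [mul_neg, div_mul_eq_mul_div, mul_assoc, hsqrt, ← Real.sqrt_mul
    (div_nonneg (by positivity) (Real.Gamma_pos_of_pos (by positivity)).le), div_mul_div_comm]
  ring
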